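/- arXiv:1504.02811 — 3 statements merged into one kernel-verified Lean document; each statement's English description precedes it below -/
import Mathlib

section
/- For every n×n complex matrix A and every natural number j, one has the operator identity M_Π† (Π A Π* M_Π†)^j = (M_Π† A)^j M_Π†. -/
open Matrix

/-! `M_Π†` annihilates `w` on the right and `w*` on the left, so it absorbs `Π` on its right and
`Π*` on its left. Hence left multiplication by `M_Π†` semiconjugates `Π A Π* M_Π†` to `M_Π† A`,
and semiconjugacy passes to powers. -/

theorem SemiconjBy.of_mul_eq_self {S : Type*} [Semigroup S] {b p q : S}
    (hbp : b * p = b) (hqb : q * b = b) (a : S) :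
    SemiconjBy b (p * a * q * b) (b * a) := by
  rw [SemiconjBy, ← mul_assoc, ← mul_assoc, ← mul_assoc, hbp, mul_assoc (b * a), hqb]

namespace Matrix

variable {ι α : Type*} [Fintype ι] [DecidableEq ι]

theorem mul_one_sub_smul_vecMulVec_of_mulVec_eq_zero [CommRing α] {D : Matrix ι ι α}
    {u : ι → α} (hu : D *ᵥ u = 0) (c : α) (y : ι → α) :
    D * (1 - c • vecMulVec u y) = D := by
  rw [mul_sub, mul_one, Matrix.mul_smul, mul_vecMulVec, hu, zero_vecMulVec, smul_zero, sub_zero]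

theorem one_sub_smul_vecMulVec_mul_of_vecMul_eq_zero [CommRing α] {D : Matrix ι ι α}
    {v : ι → α} (hv : v ᵥ* D = 0) (c : α) (y : ι → α) :
    (1 - c • vecMulVec y v) * D = D := by
  rw [sub_mul, one_mul, Matrix.smul_mul, vecMulVec_mul, hv, vecMulVec_zero, smul_zero, sub_zero]

variable [Field α] {N : Matrix ι ι α} {u v : ι → α}

/-- Rank-one deflation of `N` along `u` and `v`; for `N = M⁻¹`, `u = w`, `v = w*` it is `M_Π†`. -/
def deflate (N : Matrix ι ι α) (u v : ι → α) : Matrix ι ι α :=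
  (1 - (v ⬝ᵥ N *ᵥ u)⁻¹ • vecMulVec (N *ᵥ u) v) * N

theorem deflate_mulVec_eq_zero (h : v ⬝ᵥ N *ᵥ u ≠ 0) : deflate N u v *ᵥ u = 0 := by
  rw [deflate, ← mulVec_mulVec, sub_mulVec, one_mulVec, smul_mulVec, vecMulVec_mulVec,
    op_smul_eq_smul, smul_smul, inv_mul_cancel₀ h, one_smul, sub_self]

theorem vecMul_deflate_eq_zero (h : v ⬝ᵥ N *ᵥ u ≠ 0) : v ᵥ* deflate N u v = 0 := by
  rw [deflate, ← vecMul_vecMul, vecMul_sub, vecMul_one, vecMul_smul, vecMul_vecMulVec, smul_smul,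
    inv_mul_cancel₀ h, one_smul, sub_self, zero_vecMul]

end Matrix

theorem stabilized_preconditioner_power_identity_general
    (n : ℕ) (M : Matrix (Fin n) (Fin n) ℂ)
    (x w : Fin n → ℂ)
    (hwMw : star w ⬝ᵥ M⁻¹ *ᵥ w ≠ 0)
    (P : Matrix (Fin n) (Fin n) ℂ)
    (hP : P = 1 - (star x ⬝ᵥ w)⁻¹ • vecMulVec w (star x))
    (MPd : Matrix (Fin n) (Fin n) ℂ)
    (hMPd : MPd = (1 - (star w ⬝ᵥ M⁻¹ *ᵥ w)⁻¹ • vecMulVec (M⁻¹ *ᵥ w) (star w)) * M⁻¹) :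
    ∀ (A : Matrix (Fin n) (Fin n) ℂ) (j : ℕ),
      MPd * (P * A * Pᴴ * MPd) ^ j = (MPd * A) ^ j * MPd := by
  intro A j
  replace hMPd : MPd = deflate M⁻¹ w (star w) := hMPd
  have hMPd_P : MPd * P = MPd := by
    rw [hP, hMPd]
    exact mul_one_sub_smul_vecMulVec_of_mulVec_eq_zero (deflate_mulVec_eq_zero hwMw) _ _
  have hPH_MPd : Pᴴ * MPd = MPd := by
    rw [hP, hMPd, conjTranspose_sub, conjTranspose_one, conjTranspose_smul, conjTranspose_vecMulVec,
      star_star]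
    exact one_sub_smul_vecMulVec_mul_of_vecMul_eq_zero (vecMul_deflate_eq_zero hwMw) _ _
  exact ((SemiconjBy.of_mul_eq_self hMPd_P hPH_MPd A).pow_right j).eq

/-- with `Π = I − (w x*)/(x*w)` and
`M_Π† = (I − (M⁻¹w w*)/(w*M⁻¹w)) M⁻¹`, for every `n×n` complex matrix `A` and every
natural number `j` one has `M_Π† (Π A Π* M_Π†)^j = (M_Π† A)^j M_Π†`. -/
theorem stabilized_preconditioner_power_identity
    (n : ℕ) (M : Matrix (Fin n) (Fin n) ℂ) (hM : IsUnit M.det)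
    (x w : Fin n → ℂ)
    (hxw : star x ⬝ᵥ w ≠ 0)
    (hwMw : star w ⬝ᵥ M⁻¹ *ᵥ w ≠ 0)
    (P : Matrix (Fin n) (Fin n) ℂ)
    (hP : P = 1 - (star x ⬝ᵥ w)⁻¹ • vecMulVec w (star x))
    (MPd : Matrix (Fin n) (Fin n) ℂ)
    (hMPd : MPd = (1 - (star w ⬝ᵥ M⁻¹ *ᵥ w)⁻¹ • vecMulVec (M⁻¹ *ᵥ w) (star w)) * M⁻¹) :
    ∀ (A : Matrix (Fin n) (Fin n) ℂ) (j : ℕ),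
      MPd * (P * A * Pᴴ * MPd) ^ j = (MPd * A) ^ j * MPd :=
  stabilized_preconditioner_power_identity_general n M x w hwMw P hP MPd hMPd
end

section
/- (Exact solution of the Jacobi–Davidson correction equation.) If Δx ∈ ℂ^n satisfies Π₂ Δx = Δx and Π₁ A Π₂ Δx = −A x, then x + Δx = ((x*Bx)/(x*B A⁻¹ B x)) · A⁻¹ B x; in particular, x + Δx is parallel to A⁻¹ B x. -/
/-!
Since `Π₁ w` differs from `w` only by a multiple of `Bx`, the equation `Π₁ A Π₂ Δx = −Ax`
says that `A (x + Δx)` is a multiple of `Bx`, i.e. `x + Δx = c • A⁻¹Bx`. The condition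
`Π₂ Δx = Δx` says `x*BΔx = 0`, so pairing with `x*B` gives `x*Bx = c · x*BA⁻¹Bx`, which
determines `c`.
-/

open Matrix

section ObliqueProjection

variable {𝕜 m : Type*} [Field 𝕜] [Fintype m] [DecidableEq m]

/-- `I - u vᵀ / (vᵀ u)`: the projection onto the kernel of `vᵀ` along `u`, so that
`Π₁ = obliqueProj (B x) (x*)` and `Π₂ = obliqueProj x (x* B)`. -/
def obliqueProj (u v : m → 𝕜) : Matrix m m 𝕜 :=
  1 - (v ⬝ᵥ u)⁻¹ • vecMulVec u v

theorem obliqueProj_mulVec (u v w : m → 𝕜) :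
    obliqueProj u v *ᵥ w = w - ((v ⬝ᵥ w) / (v ⬝ᵥ u)) • u := by
  rw [obliqueProj, sub_mulVec, one_mulVec, smul_mulVec, vecMulVec_mulVec,
    op_smul_eq_smul, smul_smul, div_eq_inv_mul]

theorem obliqueProj_mulVec_eq_self_iff {u v : m → 𝕜} (huv : v ⬝ᵥ u ≠ 0) (w : m → 𝕜) :
    obliqueProj u v *ᵥ w = w ↔ v ⬝ᵥ w = 0 := by
  have hu : u ≠ 0 := by rintro rfl; exact huv (dotProduct_zero v)
  rw [obliqueProj_mulVec, sub_eq_self, smul_eq_zero, div_eq_zero_iff]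
  simp [huv, hu]

theorem conjTranspose_obliqueProj [StarRing 𝕜] (u v : m → 𝕜) :
    (obliqueProj u v)ᴴ = obliqueProj (star v) (star u) := by
  rw [obliqueProj, obliqueProj, conjTranspose_sub, conjTranspose_one, conjTranspose_smul,
    conjTranspose_vecMulVec, star_inv₀, star_dotProduct_star]

end ObliqueProjection

theorem Matrix.IsHermitian.star_mulVec_dotProduct {R m : Type*} [NonUnitalSemiring R]
    [StarRing R] [Fintype m] {B : Matrix m m R} (hB : B.IsHermitian) (x w : m → R) :
    star (B *ᵥ x) ⬝ᵥ w = star x ⬝ᵥ B *ᵥ w := by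
  rw [star_mulVec, hB.eq, dotProduct_mulVec]

theorem eq_div_dotProduct_smul_of_eq_smul {𝕜 m : Type*} [Field 𝕜] [Fintype m]
    {v w y : m → 𝕜} {c a : 𝕜} (hy : y = c • w) (hvy : v ⬝ᵥ y = a) (ha : a ≠ 0) :
    y = (a / (v ⬝ᵥ w)) • w := by
  subst hy hvy
  rw [dotProduct_smul, smul_eq_mul] at ha ⊢
  rw [mul_div_assoc, div_self (right_ne_zero_of_mul ha), mul_one]

theorem jacobi_davidson_correction_solution_general
    (n : ℕ) (A B : Matrix (Fin n) (Fin n) ℂ)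
    (hB : B.IsHermitian) (hA : IsUnit A.det)
    (x : Fin n → ℂ)
    (hxBx : star x ⬝ᵥ B *ᵥ x ≠ 0)
    (P1 P2 : Matrix (Fin n) (Fin n) ℂ)
    (hP1 : P1 = 1 - (star x ⬝ᵥ B *ᵥ x)⁻¹ • vecMulVec (B *ᵥ x) (star x))
    (hP2 : P2 = P1ᴴ)
    (dx : Fin n → ℂ)
    (hdx1 : P2 *ᵥ dx = dx)
    (hdx2 : (P1 * A * P2) *ᵥ dx = -(A *ᵥ x)) :
    x + dx = ((star x ⬝ᵥ B *ᵥ x) / (star x ⬝ᵥ (B * A⁻¹ * B) *ᵥ x)) •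
      ((A⁻¹ * B) *ᵥ x) := by
  change P1 = obliqueProj (B *ᵥ x) (star x) at hP1
  replace hP2 : P2 = obliqueProj x (star (B *ᵥ x)) := by
    rw [hP2, hP1, conjTranspose_obliqueProj, star_star]
  have horth : star x ⬝ᵥ B *ᵥ dx = 0 := by
    rwa [hP2, obliqueProj_mulVec_eq_self_iff (by rwa [hB.star_mulVec_dotProduct]),
      hB.star_mulVec_dotProduct] at hdx1
  obtain ⟨c, hAsol⟩ : ∃ c : ℂ, A *ᵥ (x + dx) = c • (B *ᵥ x) := by
    refine ⟨(star x ⬝ᵥ A *ᵥ dx) / (star x ⬝ᵥ B *ᵥ x), ?_⟩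
    rw [Matrix.mul_assoc, ← mulVec_mulVec, ← mulVec_mulVec, hdx1, hP1,
      obliqueProj_mulVec] at hdx2
    rw [mulVec_add]
    linear_combination (norm := module) hdx2
  have hsol : x + dx = c • ((A⁻¹ * B) *ᵥ x) := by
    rw [← mulVec_mulVec, ← mulVec_smul, ← hAsol, mulVec_mulVec, nonsing_inv_mul A hA,
      one_mulVec]
  refine (eq_div_dotProduct_smul_of_eq_smul (v := star x ᵥ* B) hsol ?_ hxBx).trans ?_
  · rw [← dotProduct_mulVec, mulVec_add, dotProduct_add, horth, add_zero]
  · rw [← dotProduct_mulVec, mulVec_mulVec, Matrix.mul_assoc]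

/-- exact solution of the Jacobi–Davidson correction equation.  With
`Π₁ = I − (Bx x*)/(x*Bx)` and `Π₂ = Π₁*`, if `Π₂ Δx = Δx` and `Π₁ A Π₂ Δx = −A x`,
then `x + Δx = ((x*Bx)/(x*B A⁻¹ B x)) A⁻¹ B x`; in particular `x + Δx` is parallel
to `A⁻¹ B x`. -/
theorem jacobi_davidson_correction_solution
    (n : ℕ) (A B : Matrix (Fin n) (Fin n) ℂ)
    (hB : B.IsHermitian) (hA : IsUnit A.det)
    (x : Fin n → ℂ)
    (hxBx : star x ⬝ᵥ B *ᵥ x ≠ 0)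
    (hxBABx : star x ⬝ᵥ (B * A⁻¹ * B) *ᵥ x ≠ 0)
    (P1 P2 : Matrix (Fin n) (Fin n) ℂ)
    (hP1 : P1 = 1 - (star x ⬝ᵥ B *ᵥ x)⁻¹ • vecMulVec (B *ᵥ x) (star x))
    (hP2 : P2 = P1ᴴ)
    (dx : Fin n → ℂ)
    (hdx1 : P2 *ᵥ dx = dx)
    (hdx2 : (P1 * A * P2) *ᵥ dx = -(A *ᵥ x)) :
    x + dx = ((star x ⬝ᵥ B *ᵥ x) / (star x ⬝ᵥ (B * A⁻¹ * B) *ᵥ x)) •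
      ((A⁻¹ * B) *ᵥ x) :=
  jacobi_davidson_correction_solution_general n A B hB hA x hxBx P1 P2 hP1 hP2 dx hdx1 hdx2
end

section
/- (Action of the block stabilized preconditioner.) If Y ∈ ℂ^{n×q} satisfies Z*Y = 0 (equivalently 𝚷*Y = Y) and B := 𝚷 M 𝚷* Y, then Y = (I − M⁻¹ Z (Z*M⁻¹Z)⁻¹ Z*) M⁻¹ B. -/
/-!
Since `Z*Y = 0`, the projector `𝚷*` fixes `Y`, so `M⁻¹ B = M⁻¹ 𝚷 M Y = Y - M⁻¹ Z t` for some
`q × q` matrix `t`. The oblique projector `I − M⁻¹ Z (Z*M⁻¹Z)⁻¹ Z*` fixes `Y` (again because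
`Z*Y = 0`) and annihilates the range of `M⁻¹ Z`, hence maps `M⁻¹ B` back to `Y`.
-/

open Matrix

namespace Matrix

variable {m k p R : Type*} [Fintype m] [Fintype k] [DecidableEq m] [CommRing R]

theorem conjTranspose_one_sub_mul_mul_of_conjTranspose_mul_eq_zero [StarRing R]
    {Z X : Matrix m k R} (W : Matrix k k R) {Y : Matrix m p R} (hY : Zᴴ * Y = 0) :
    (1 - Z * W * Xᴴ)ᴴ * Y = Y := by
  simp [Matrix.sub_mul, Matrix.mul_assoc, hY]

theorem nonsing_inv_mul_one_sub_mul_mul_mul {M : Matrix m m R} (hM : IsUnit M.det)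
    (Z : Matrix m k R) (C : Matrix k m R) (Y : Matrix m p R) :
    M⁻¹ * ((1 - Z * C) * M * Y) = Y - M⁻¹ * Z * (C * M * Y) := by
  simp only [Matrix.sub_mul, Matrix.mul_sub, Matrix.one_mul, Matrix.mul_assoc,
    nonsing_inv_mul_cancel_left _ _ hM]

theorem one_sub_mul_mul_nonsing_inv_mul_mul_of_mul_eq_zero [DecidableEq k] (L : Matrix m m R)
    (A : Matrix m k R) (C : Matrix k m R) {Y : Matrix m p R} (hY : C * Y = 0) :
    (1 - L * A * (C * L * A)⁻¹ * C) * Y = Y := by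
  simp [Matrix.sub_mul, Matrix.mul_assoc, hY]

theorem one_sub_mul_mul_nonsing_inv_mul_mul_mul_mul [DecidableEq k] (L : Matrix m m R)
    (A : Matrix m k R) (C : Matrix k m R) (hCLA : IsUnit (C * L * A).det) (t : Matrix k p R) :
    (1 - L * A * (C * L * A)⁻¹ * C) * (L * A * t) = 0 := by
  have hcancel : (C * L * A)⁻¹ * (C * (L * A * t)) = t := by
    simpa only [Matrix.mul_assoc] using nonsing_inv_mul_cancel_left _ t hCLA
  rw [Matrix.sub_mul, Matrix.one_mul, Matrix.mul_assoc (L * A * (C * L * A)⁻¹),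
    Matrix.mul_assoc (L * A), hcancel, sub_self]

end Matrix

theorem block_stabilized_preconditioner_action_general
    (n q : ℕ) (M : Matrix (Fin n) (Fin n) ℂ) (hM : IsUnit M.det)
    (X Z : Matrix (Fin n) (Fin q) ℂ)
    (hZMZ : IsUnit (Zᴴ * M⁻¹ * Z).det)
    (P : Matrix (Fin n) (Fin n) ℂ)
    (hP : P = 1 - Z * (Xᴴ * Z)⁻¹ * Xᴴ)
    (Y Bm : Matrix (Fin n) (Fin q) ℂ)
    (hY : Zᴴ * Y = 0)
    (hB : Bm = P * M * Pᴴ * Y) :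
    Y = (1 - M⁻¹ * Z * (Zᴴ * M⁻¹ * Z)⁻¹ * Zᴴ) * M⁻¹ * Bm := by
  have hPY : Pᴴ * Y = Y := hP ▸ conjTranspose_one_sub_mul_mul_of_conjTranspose_mul_eq_zero _ hY
  have hMB : M⁻¹ * Bm = Y - M⁻¹ * Z * ((Xᴴ * Z)⁻¹ * Xᴴ * M * Y) := by
    rw [hB, Matrix.mul_assoc (P * M), hPY, hP, Matrix.mul_assoc Z,
      nonsing_inv_mul_one_sub_mul_mul_mul hM]
  rw [Matrix.mul_assoc _ M⁻¹, hMB, Matrix.mul_sub,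
    one_sub_mul_mul_nonsing_inv_mul_mul_of_mul_eq_zero _ _ _ hY,
    one_sub_mul_mul_nonsing_inv_mul_mul_mul_mul _ _ _ hZMZ, sub_zero]

/-- action of the block stabilized preconditioner.  With
`𝚷 = I − Z (X*Z)⁻¹ X*`, if `Z*Y = 0` and `B = 𝚷 M 𝚷* Y`, then
`Y = (I − M⁻¹ Z (Z*M⁻¹Z)⁻¹ Z*) M⁻¹ B`. -/
theorem block_stabilized_preconditioner_action
    (n q : ℕ) (M : Matrix (Fin n) (Fin n) ℂ) (hM : IsUnit M.det)
    (X Z : Matrix (Fin n) (Fin q) ℂ)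
    (hXZ : IsUnit (Xᴴ * Z).det)
    (hZMZ : IsUnit (Zᴴ * M⁻¹ * Z).det)
    (P : Matrix (Fin n) (Fin n) ℂ)
    (hP : P = 1 - Z * (Xᴴ * Z)⁻¹ * Xᴴ)
    (Y Bm : Matrix (Fin n) (Fin q) ℂ)
    (hY : Zᴴ * Y = 0)
    (hB : Bm = P * M * Pᴴ * Y) :
    Y = (1 - M⁻¹ * Z * (Zᴴ * M⁻¹ * Z)⁻¹ * Zᴴ) * M⁻¹ * Bm :=
  block_stabilized_preconditioner_action_general n q M hM X Z hZMZ P hP Y Bm hY hB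
end
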